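/- Let λ > 0 with λ ≠ 1, let c > 0, and let m ∈ ℝ. Then there is no point w of the upper half-plane H² such that both w and λ·w (the point with complex coordinate λ times that of w, which again lies in H²) belong to the square hyperbola S_m(λcI, cI); that is, one cannot have both d(w, λcI)² − d(w, cI)² = m and d(λ·w, λcI)² − d(λ·w, cI)² = m. -/

import Mathlib

/-!
Since `w ↦ λ • w` is an isometry, the second condition says `d(w, cI)² - d(w, (c/λ)I)² = m`,
so `f(s) = d(w, eˢI)²` has equal increments over `[log c - log λ, log c]` and
`[log c, log c + log λ]`. This contradicts the strict convexity of `f`: by the hyperbolic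
Pythagorean theorem `cosh d(w, eˢI) = K cosh (s - log ‖w‖)` with `K = ‖w‖ / Im w = cosh d(w, iℝ)`,
and `t ↦ arcosh (K cosh t)` is `|t|` for `K = 1` and strictly convex and positive for `K > 1`.
-/

open UpperHalfPlane

noncomputable section

/-- The point of the upper half-plane with complex coordinate `a·i`, for `a > 0`. -/
def ptI (a : ℝ) (ha : 0 < a) : UpperHalfPlane := ⟨a * Complex.I, by simpa using ha⟩

/-- Scaling a point of the upper half-plane by a positive real `λ`. -/
def scalePt (l : ℝ) (hl : 0 < l) (w : UpperHalfPlane) : UpperHalfPlane :=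
  ⟨(l : ℂ) * (w : ℂ), by
    rw [Complex.mul_im]
    simpa using mul_pos hl w.im_pos⟩

open Real Set

theorem StrictConvexOn.sq {E : Type*} [AddCommGroup E] [Module ℝ E] {s : Set E} {g : E → ℝ}
    (hg : StrictConvexOn ℝ s g) (hg₀ : ∀ x ∈ s, 0 ≤ g x) :
    StrictConvexOn ℝ s fun x ↦ g x ^ 2 := by
  refine ⟨hg.1, fun x hx y hy hxy a b ha hb hab ↦ ?_⟩
  have hlt := hg.2 hx hy hxy ha hb hab
  have hg_nonneg := hg₀ _ (hg.1 hx hy ha.le hb.le hab)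
  simp only [smul_eq_mul] at hlt ⊢
  calc g (a • x + b • y) ^ 2 < (a * g x + b * g y) ^ 2 := by gcongr
    _ = a * g x ^ 2 + b * g y ^ 2 - a * b * (g x - g y) ^ 2 := by
      linear_combination (g x ^ 2 * a + g y ^ 2 * b) * hab
    _ ≤ a * g x ^ 2 + b * g y ^ 2 :=
      sub_le_self _ (mul_nonneg (mul_pos ha hb).le (sq_nonneg _))

theorem StrictConvexOn.two_mul_lt_add_sub {f : ℝ → ℝ} (hf : StrictConvexOn ℝ univ f) (x : ℝ)
    {h : ℝ} (hh : h ≠ 0) : 2 * f x < f (x + h) + f (x - h) := by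
  have := hf.2 (mem_univ (x + h)) (mem_univ (x - h)) (by contrapose! hh; linarith)
    (one_half_pos (α := ℝ)) one_half_pos (add_halves 1)
  simp only [smul_eq_mul] at this
  rw [show 1 / 2 * (x + h) + 1 / 2 * (x - h) = x by ring] at this
  linarith

section ArcoshMulCosh

variable {K : ℝ}

theorem one_lt_mul_cosh (hK : 1 < K) (t : ℝ) : 1 < K * cosh t := by
  nlinarith [one_le_cosh t]

theorem mul_cosh_sq_sub_one_pos (hK : 1 < K) (t : ℝ) : 0 < (K * cosh t) ^ 2 - 1 := by
  nlinarith [one_lt_mul_cosh hK t]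

theorem hasDerivAt_arcosh_mul_cosh (hK : 1 < K) (t : ℝ) :
    HasDerivAt (fun t ↦ arcosh (K * cosh t)) (K * sinh t / √((K * cosh t) ^ 2 - 1)) t := by
  refine ((hasDerivAt_arcosh (one_lt_mul_cosh hK t)).comp t
    ((hasDerivAt_cosh t).const_mul K)).congr_deriv ?_
  ring

theorem hasDerivAt_mul_sinh_div_sqrt (hK : 1 < K) (t : ℝ) :
    HasDerivAt (fun t ↦ K * sinh t / √((K * cosh t) ^ 2 - 1))
      (K * (K ^ 2 - 1) * cosh t / √((K * cosh t) ^ 2 - 1) ^ 3) t := by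
  have hQ := mul_cosh_sq_sub_one_pos hK t
  have hS := Real.sqrt_pos.2 hQ
  have hQ' := (((hasDerivAt_cosh t).const_mul K).pow 2).sub_const 1
  refine (((hasDerivAt_sinh t).const_mul K).div (hQ'.sqrt hQ.ne') hS.ne').congr_deriv ?_
  have hSS := Real.sq_sqrt hQ.le
  simp only [Pi.pow_apply]
  set S := √((K * cosh t) ^ 2 - 1)
  field_simp
  norm_num
  linear_combination (2 * cosh t) * hSS + (2 * K ^ 2 * cosh t) * cosh_sq_sub_sinh_sq t

theorem strictConvexOn_arcosh_mul_cosh (hK : 1 < K) :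
    StrictConvexOn ℝ univ fun t ↦ arcosh (K * cosh t) := by
  have hderiv :
      deriv (fun t ↦ arcosh (K * cosh t)) = fun t ↦ K * sinh t / √((K * cosh t) ^ 2 - 1) :=
    funext fun t ↦ (hasDerivAt_arcosh_mul_cosh hK t).deriv
  refine strictConvexOn_univ_of_deriv2_pos
    (continuous_iff_continuousAt.2 fun t ↦ (hasDerivAt_arcosh_mul_cosh hK t).continuousAt)
    fun t ↦ ?_
  rw [Function.iterate_succ_apply, Function.iterate_one, hderiv,
    (hasDerivAt_mul_sinh_div_sqrt hK t).deriv]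
  have hQ := mul_cosh_sq_sub_one_pos hK t
  have hK2 : 0 < K ^ 2 - 1 := by nlinarith
  have := cosh_pos t
  positivity

theorem strictConvexOn_arcosh_mul_cosh_sq (hK : 1 ≤ K) :
    StrictConvexOn ℝ univ fun t ↦ arcosh (K * cosh t) ^ 2 := by
  rcases hK.eq_or_lt with rfl | hK
  · have : (fun t ↦ arcosh (1 * cosh t) ^ 2) = fun t ↦ t ^ 2 := funext fun t ↦ by
      rw [one_mul, ← cosh_abs, arcosh_cosh (abs_nonneg t), sq_abs]
    rw [this]
    exact even_two.strictConvexOn_pow two_ne_zero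
  · exact (strictConvexOn_arcosh_mul_cosh hK).sq fun t _ ↦
      arcosh_nonneg (one_lt_mul_cosh hK t).le

end ArcoshMulCosh

theorem ptI_re (a : ℝ) (ha : 0 < a) : (ptI a ha).re = 0 := by
  simp [ptI, UpperHalfPlane.re]

theorem ptI_im (a : ℝ) (ha : 0 < a) : (ptI a ha).im = a := by
  simp [ptI, UpperHalfPlane.im]

theorem dist_ptI (w : ℍ) (a : ℝ) (ha : 0 < a) :
    dist w (ptI a ha) = arcosh (‖(w : ℂ)‖ / w.im * cosh (log a - log ‖(w : ℂ)‖)) := by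
  have hy := w.im_pos
  have hr : 0 < ‖(w : ℂ)‖ := hy.trans_le (Complex.im_le_norm w)
  have hr2 : ‖(w : ℂ)‖ ^ 2 = w.re ^ 2 + w.im ^ 2 := by
    rw [Complex.sq_norm, Complex.normSq_apply]; simp only [coe_re, coe_im]; ring
  have hcosh :
      cosh (dist w (ptI a ha)) = ‖(w : ℂ)‖ / w.im * cosh (log a - log ‖(w : ℂ)‖) := by
    rw [cosh_dist', ← log_div ha.ne' hr.ne', cosh_log (div_pos ha hr), ptI_re, ptI_im]
    field_simp
    linear_combination -hr2
  rw [← hcosh, arcosh_cosh dist_nonneg]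

theorem ptI_exp_log (a : ℝ) (ha : 0 < a) : ptI (exp (log a)) (exp_pos _) = ptI a ha := by
  simp only [exp_log ha]

theorem dist_scalePt_ptI (l : ℝ) (hl : 0 < l) (w : ℍ) (a : ℝ) (ha : 0 < a) :
    dist (scalePt l hl w) (ptI a ha) = dist w (ptI (a / l) (div_pos ha hl)) := by
  have hw : scalePt l hl w = (⟨l, hl⟩ : {x : ℝ // 0 < x}) • w := by
    ext1; simp [scalePt]
  have hp : ptI a ha = (⟨l, hl⟩ : {x : ℝ // 0 < x}) • ptI (a / l) (div_pos ha hl) := by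
    ext1
    have : (l : ℂ) ≠ 0 := by exact_mod_cast hl.ne'
    simp [ptI]
    field_simp
  rw [hw, hp, (isometry_pos_mul _).dist_eq]

theorem strictConvexOn_dist_ptI_exp_sq (w : ℍ) :
    StrictConvexOn ℝ univ fun s ↦ dist w (ptI (exp s) (exp_pos s)) ^ 2 := by
  have hK : 1 ≤ ‖(w : ℂ)‖ / w.im := (one_le_div w.im_pos).2 (Complex.im_le_norm w)
  have hfun : (fun s ↦ dist w (ptI (exp s) (exp_pos s)) ^ 2) =
      (fun t ↦ arcosh (‖(w : ℂ)‖ / w.im * cosh t) ^ 2) ∘ fun s ↦ -log ‖(w : ℂ)‖ + s :=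
    funext fun s ↦ by simp only [Function.comp, dist_ptI, log_exp, sub_eq_neg_add]
  rw [hfun]
  simpa only [preimage_univ] using
    (strictConvexOn_arcosh_mul_cosh_sq hK).translate_right (-log ‖(w : ℂ)‖)

/-- For `λ > 0`, `λ ≠ 1`, `c > 0` and `m ∈ ℝ`, no point `w ∈ ℍ` is such that both `w`
and `λ·w` lie on the square hyperbola `S_m(λcI, cI)`. -/
theorem no_two_points_of_ray_orbit_on_squareHyperbola
    (l c m : ℝ) (hl : 0 < l) (hl1 : l ≠ 1) (hc : 0 < c) :
    ¬ ∃ w : UpperHalfPlane,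
        dist w (ptI (l * c) (mul_pos hl hc)) ^ 2 - dist w (ptI c hc) ^ 2 = m ∧
        dist (scalePt l hl w) (ptI (l * c) (mul_pos hl hc)) ^ 2
          - dist (scalePt l hl w) (ptI c hc) ^ 2 = m := by
  rintro ⟨w, h1, h2⟩
  set G : ℝ → ℝ := fun s ↦ dist w (ptI (exp s) (exp_pos s)) ^ 2
  have hG (a : ℝ) (ha : 0 < a) : dist w (ptI a ha) ^ 2 = G (log a) := by
    simp only [G, ptI_exp_log a ha]
  rw [dist_scalePt_ptI, dist_scalePt_ptI] at h2
  rw [hG, hG, log_mul hl.ne' hc.ne', add_comm] at h1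
  rw [hG, hG, mul_div_cancel_left₀ c hl.ne', log_div hc.ne' hl.ne'] at h2
  have := (strictConvexOn_dist_ptI_exp_sq w).two_mul_lt_add_sub (log c)
    (log_ne_zero_of_pos_of_ne_one hl hl1)
  linarith
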